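/- arXiv:nlin/0006024 — 3 statements merged into one kernel-verified Lean document; each statement's English description precedes it below -/
import Mathlib

section
/- The radial function φ constructed by patching the Bessel profile on [0,R₁] with B ln(R/r) on [R₁,R] satisfies κΔφ + (v₀²/κ)f(φ) ≥ 0 in the disc of radius R, where f ≥ f₁ and f₁ is the piecewise-linear cutoff nonlinearity: f₁(s) = 0 for s ≤ θ₁, f₁(s) = f(θ₂)(s-θ₁)/(θ₂-θ₁) for θ₁ ≤ s ≤ θ₂, f₁(s) = f(s) for s ≥ θ₂. That is, φ is a subsolution of the stationary reaction-diffusion equation. -/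
open Set Filter Topology

/-!
Away from `R₁` the claim is immediate: inside, `κΔφ = -(v₀²/κ) f₁(φ) ≥ -(v₀²/κ) f(φ)`; on the annulus
`Δφ = 0` and `f(φ) ≥ f₁(φ) = 0` because `φ ≤ θ₁`. At the junction `r = R₁` both annulus facts,
`Δφ = 0` and `φ ≤ θ₁`, pass to the limit from the right, since `φ` is `C²` across `R₁`.
-/

/-- `Δ (x ↦ φ ‖x‖)` on `ℝ²`, written in the radius `r`. -/
noncomputable def radialLaplacian (φ : ℝ → ℝ) (r : ℝ) : ℝ :=
  deriv (deriv φ) r + deriv φ r / r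

theorem ContDiffOn.continuousOn_radialLaplacian {φ : ℝ → ℝ} {s : Set ℝ} (hs : IsOpen s)
    (h0 : (0 : ℝ) ∉ s) (hφ : ContDiffOn ℝ 2 φ s) : ContinuousOn (radialLaplacian φ) s := by
  have hd : ContDiffOn ℝ 1 (deriv φ) s := by
    simpa using hφ.deriv_of_isOpen (m := 1) hs (by norm_num)
  refine (hd.continuousOn_deriv_of_isOpen hs le_rfl).add ?_
  exact (hφ.continuousOn_deriv_of_isOpen hs one_le_two).div continuousOn_id
    fun x hx hx0 => h0 (hx0 ▸ hx)

theorem mem_of_continuousWithinAt_Ioi_of_forall_mem_Ioo {α β : Type*} [TopologicalSpace α]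
    [LinearOrder α] [OrderTopology α] [DenselyOrdered α] [TopologicalSpace β] {g : α → β}
    {t : Set β} {x c : α} (ht : IsClosed t) (hxc : x < c) (hg : ContinuousWithinAt g (Ioi x) x)
    (h : ∀ y ∈ Ioo x c, g y ∈ t) : g x ∈ t :=
  haveI : (𝓝[>] x).NeBot := nhdsGT_neBot_of_exists_gt ⟨c, hxc⟩
  ht.mem_of_tendsto hg (eventually_of_mem (Ioo_mem_nhdsGT hxc) h)

theorem radialLaplacian_eq_zero_and_le_of_mem_Ico {φ : ℝ → ℝ} {R₁ R θ : ℝ}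
    (hφ : ContDiffOn ℝ 2 φ (Ioo 0 R))
    (hann : ∀ r ∈ Ioo R₁ R, radialLaplacian φ r = 0 ∧ φ r ≤ θ)
    {r : ℝ} (hr0 : 0 < r) (hr : r ∈ Ico R₁ R) : radialLaplacian φ r = 0 ∧ φ r ≤ θ := by
  have hnhds : Ioo 0 R ∈ 𝓝 r := isOpen_Ioo.mem_nhds ⟨hr0, hr.2⟩
  have hann' : ∀ y ∈ Ioo r R, radialLaplacian φ y = 0 ∧ φ y ≤ θ :=
    fun y hy => hann y ⟨hr.1.trans_lt hy.1, hy.2⟩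
  have hL := ((hφ.continuousOn_radialLaplacian isOpen_Ioo (fun h => h.1.false)).continuousAt
    hnhds).continuousWithinAt (s := Ioi r)
  have hφr := (hφ.continuousOn.continuousAt hnhds).continuousWithinAt (s := Ioi r)
  exact ⟨mem_of_continuousWithinAt_Ioi_of_forall_mem_Ioo (t := {0}) isClosed_singleton hr.2 hL
      fun y hy => (hann' y hy).1,
    mem_of_continuousWithinAt_Ioi_of_forall_mem_Ioo isClosed_Iic hr.2 hφr
      fun y hy => (hann' y hy).2⟩

theorem patched_profile_is_subsolution_general
    (κ v₀ θ₁ θ₂ R₁ R : ℝ)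
    (hκ : 0 < κ)
    (hθ2 : θ₂ < 1)
    (f f₁ : ℝ → ℝ)
    -- the piecewise-linear cutoff nonlinearity f₁:
    (hf₁a : ∀ s, s ≤ θ₁ → f₁ s = 0)
    (hf₁le : ∀ s, 0 ≤ s → s ≤ 1 → f₁ s ≤ f s)
    (φ : ℝ → ℝ)
    (hφC2 : ContDiffOn ℝ 2 φ (Set.Ioo 0 R))
    (hφrange : ∀ r, 0 ≤ φ r ∧ φ r ≤ θ₂)
    -- interior piece: κΔφ + (v₀²/κ) f₁(φ) = 0 on (0,R₁)
    (hint : ∀ r ∈ Set.Ioo 0 R₁,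
      κ * (deriv (deriv φ) r + deriv φ r / r) + (v₀^2 / κ) * f₁ (φ r) = 0)
    -- annulus piece: φ harmonic with φ ≤ θ₁ on (R₁,R)
    (hann : ∀ r ∈ Set.Ioo R₁ R,
      deriv (deriv φ) r + deriv φ r / r = 0 ∧ φ r ≤ θ₁) :
    ∀ r ∈ Set.Ioo 0 R,
      0 ≤ κ * (deriv (deriv φ) r + deriv φ r / r) + (v₀^2 / κ) * f (φ r) := by
  intro r hr
  have hc : 0 ≤ v₀ ^ 2 / κ := by positivity
  have hf₁f : f₁ (φ r) ≤ f (φ r) := hf₁le _ (hφrange r).1 ((hφrange r).2.trans hθ2.le)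
  rcases lt_or_ge r R₁ with hrR₁ | hR₁r
  · have hsol := hint r ⟨hr.1, hrR₁⟩
    linarith [mul_le_mul_of_nonneg_left hf₁f hc]
  · obtain ⟨hL, hφθ⟩ := radialLaplacian_eq_zero_and_le_of_mem_Ico hφC2 hann hr.1 ⟨hR₁r, hr.2⟩
    rw [radialLaplacian] at hL
    rw [hL, mul_zero, zero_add]
    exact mul_nonneg hc (hf₁a _ hφθ ▸ hf₁f)

/-- The patched radial profile (Bessel on `[0,R₁]`, logarithmic on
`[R₁,R]`) is a subsolution: `κΔφ + (v₀²/κ)f(φ) ≥ 0` on the punctured disc `0 < r < R`,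
where `f ≥ f₁` and `f₁` is the piecewise-linear cutoff of the ignition nonlinearity. -/
theorem patched_profile_is_subsolution
    (κ v₀ θ₀ θ₁ θ₂ R₁ R : ℝ)
    (hκ : 0 < κ) (hv₀ : 0 < v₀)
    (hθ₀ : 0 < θ₀) (hθ01 : θ₀ < θ₁) (hθ12 : θ₁ < θ₂) (hθ2 : θ₂ < 1)
    (hR₁ : 0 < R₁) (hR₁R : R₁ < R)
    (f f₁ : ℝ → ℝ)
    (hfLip : ∃ Kf, LipschitzOnWith Kf f (Set.Icc 0 1))
    (hfθ₂ : 0 < f θ₂)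
    -- the piecewise-linear cutoff nonlinearity f₁:
    (hf₁a : ∀ s, s ≤ θ₁ → f₁ s = 0)
    (hf₁b : ∀ s, θ₁ ≤ s → s ≤ θ₂ → f₁ s = f θ₂ * (s - θ₁) / (θ₂ - θ₁))
    (hf₁c : ∀ s, θ₂ ≤ s → f₁ s = f s)
    (hf₁le : ∀ s, 0 ≤ s → s ≤ 1 → f₁ s ≤ f s)
    (φ : ℝ → ℝ)
    (hφC2 : ContDiffOn ℝ 2 φ (Set.Ioo 0 R))
    (hφrange : ∀ r, 0 ≤ φ r ∧ φ r ≤ θ₂)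
    -- interior piece: κΔφ + (v₀²/κ) f₁(φ) = 0 on (0,R₁)
    (hint : ∀ r ∈ Set.Ioo 0 R₁,
      κ * (deriv (deriv φ) r + deriv φ r / r) + (v₀^2 / κ) * f₁ (φ r) = 0)
    -- annulus piece: φ harmonic with φ ≤ θ₁ on (R₁,R)
    (hann : ∀ r ∈ Set.Ioo R₁ R,
      deriv (deriv φ) r + deriv φ r / r = 0 ∧ φ r ≤ θ₁) :
    ∀ r ∈ Set.Ioo 0 R,
      0 ≤ κ * (deriv (deriv φ) r + deriv φ r / r) + (v₀^2 / κ) * f (φ r) :=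
  patched_profile_is_subsolution_general κ v₀ θ₁ θ₂ R₁ R hκ hθ2 f f₁ hf₁a hf₁le φ hφC2 hφrange hint
    hann
end

section
/- Let 0 ≤ T̄ ≤ 1 solve the stationary equation A(u(y)-ū)T̄_ξ = κΔT̄ + (v₀²/κ)f(T̄) on the strip D = ℝ × [0,H] with periodic boundary conditions in y. Then ∫∫_D f(T̄) dξdy < ∞, with the explicit bound (v₀²/κ)∫∫_{[-L+l,L]×[0,H]} f(T̄) ≤ 4κH/l + 2HA(|ū| + ‖u‖_∞) uniformly in L, where l = κ/v₀. -/
open Real MeasureTheory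


noncomputable def pdX (G : ℝ × ℝ → ℝ) : ℝ × ℝ → ℝ := fun p => fderiv ℝ G p (1, 0)
noncomputable def pdY (G : ℝ × ℝ → ℝ) : ℝ × ℝ → ℝ := fun p => fderiv ℝ G p (0, 1)

lemma hasDerivAt_pdX {G : ℝ × ℝ → ℝ} (hG : ContDiff ℝ (⊤ : ℕ∞) G) (ξ y : ℝ) :
    HasDerivAt (fun s => G (s, y)) (pdX G (ξ, y)) ξ := by
  have h1 : HasDerivAt (fun s : ℝ => (s, y)) ((1 : ℝ), (0 : ℝ)) ξ :=
    (hasDerivAt_id ξ).prodMk (hasDerivAt_const ξ y)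
  exact (hG.differentiable (by simp) (ξ, y)).hasFDerivAt.comp_hasDerivAt ξ h1

lemma hasDerivAt_pdY {G : ℝ × ℝ → ℝ} (hG : ContDiff ℝ (⊤ : ℕ∞) G) (ξ y : ℝ) :
    HasDerivAt (fun s => G (ξ, s)) (pdY G (ξ, y)) y := by
  have h1 : HasDerivAt (fun s : ℝ => (ξ, s)) ((0 : ℝ), (1 : ℝ)) y :=
    (hasDerivAt_const y ξ).prodMk (hasDerivAt_id y)
  exact (hG.differentiable (by simp) (ξ, y)).hasFDerivAt.comp_hasDerivAt y h1

lemma contDiff_pdX {G : ℝ × ℝ → ℝ} (hG : ContDiff ℝ (⊤ : ℕ∞) G) : ContDiff ℝ (⊤ : ℕ∞) (pdX G) :=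
  (hG.fderiv_right (le_refl _)).clm_apply contDiff_const

lemma contDiff_pdY {G : ℝ × ℝ → ℝ} (hG : ContDiff ℝ (⊤ : ℕ∞) G) : ContDiff ℝ (⊤ : ℕ∞) (pdY G) :=
  (hG.fderiv_right (le_refl _)).clm_apply contDiff_const

lemma swapCont (G : ℝ × ℝ → ℝ) (hG : Continuous G) {a b c d : ℝ}
    (hab : a ≤ b) (hcd : c ≤ d) :
    (∫ x in a..b, ∫ y in c..d, G (x, y)) = ∫ y in c..d, ∫ x in a..b, G (x, y) := by
  have hInt : IntegrableOn G (Set.Ioc a b ×ˢ Set.Ioc c d) :=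
    ((hG.continuousOn).integrableOn_compact (isCompact_Icc.prod isCompact_Icc)).mono_set
      (Set.prod_mono Set.Ioc_subset_Icc_self Set.Ioc_subset_Icc_self)
  have hInt' : Integrable (Function.uncurry fun x y => G (x, y))
      ((volume.restrict (Set.Ioc a b)).prod (volume.restrict (Set.Ioc c d))) := by
    rw [Measure.prod_restrict, ← Measure.volume_eq_prod]
    exact hInt
  simp only [intervalIntegral.integral_of_le hab, intervalIntegral.integral_of_le hcd]
  exact MeasureTheory.integral_integral_swap hInt'


/-- For a bounded stationary solution of the reaction-advection-diffusion
equation on the strip, the reaction term is integrable, with the explicit uniform-in-`L`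
bound `(v₀²/κ)∫_{[-L+l,L]×[0,H]} f(T̄) ≤ 4κH/l + 2HA(|ū| + ‖u‖_∞)`, where `l = κ/v₀`. -/
theorem stationary_reaction_integrable
    (H κ v₀ A ubar Cu : ℝ)
    (hH : 0 < H) (hκ : 0 < κ) (hv₀ : 0 < v₀) (hA : 0 < A)
    (u : ℝ → ℝ) (hu : Continuous u) (hCu : ∀ y, |u y| ≤ Cu)
    (f : ℝ → ℝ) (hfLip : ∃ Kf, LipschitzOnWith Kf f (Set.Icc 0 1))
    (hf0 : ∀ s, 0 ≤ s → s ≤ 1 → 0 ≤ f s)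
    (T : ℝ → ℝ → ℝ)
    (hTsmooth : ContDiff ℝ (⊤ : ℕ∞) (fun q : ℝ × ℝ => T q.1 q.2))
    (hT0 : ∀ ξ y, 0 ≤ T ξ y) (hT1 : ∀ ξ y, T ξ y ≤ 1)
    (hTper : ∀ ξ y, T ξ (y + H) = T ξ y)
    -- stationary equation A(u(y)-ū)T̄_ξ = κΔT̄ + (v₀²/κ)f(T̄):
    (hpde : ∀ ξ y,
      A * (u y - ubar) * deriv (fun s => T s y) ξ
        = κ * (deriv (deriv (fun s => T s y)) ξ + deriv (deriv (fun s => T ξ s)) y)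
          + (v₀^2 / κ) * f (T ξ y)) :
    IntegrableOn (fun p : ℝ × ℝ => f (T p.1 p.2)) (Set.univ ×ˢ Set.Icc (0:ℝ) H) ∧
    (∀ L : ℝ, κ / v₀ ≤ L →
      (v₀^2 / κ) * ∫ y in (0:ℝ)..H, ∫ ξ in (-L + κ / v₀)..L, f (T ξ y)
        ≤ 4 * κ * H / (κ / v₀) + 2 * H * A * (|ubar| + Cu)) := by
  classical
  set l : ℝ := κ / v₀ with hl_def
  have hl : 0 < l := div_pos hκ hv₀
  set c : ℝ := v₀ ^ 2 / κ with hc_def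
  have hc : 0 < c := div_pos (pow_pos hv₀ 2) hκ
  set F : ℝ × ℝ → ℝ := fun q => T q.1 q.2 with hF_def
  have hFc : Continuous F := hTsmooth.continuous
  set F1 : ℝ × ℝ → ℝ := pdX F with hF1_def
  set F2 : ℝ × ℝ → ℝ := pdY F with hF2_def
  set F11 : ℝ × ℝ → ℝ := pdX F1 with hF11_def
  set F22 : ℝ × ℝ → ℝ := pdY F2 with hF22_def
  have hF1s : ContDiff ℝ (⊤ : ℕ∞) F1 := contDiff_pdX hTsmooth
  have hF2s : ContDiff ℝ (⊤ : ℕ∞) F2 := contDiff_pdY hTsmooth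
  have hF1c : Continuous F1 := hF1s.continuous
  have hF2c : Continuous F2 := hF2s.continuous
  have hF11c : Continuous F11 := (contDiff_pdX hF1s).continuous
  have hF22c : Continuous F22 := (contDiff_pdY hF2s).continuous
  -- derivative identifications
  have hd1 : ∀ ξ y, deriv (fun s => T s y) ξ = F1 (ξ, y) := fun ξ y =>
    (hasDerivAt_pdX hTsmooth ξ y).deriv
  have hd11 : ∀ ξ y, deriv (deriv (fun s => T s y)) ξ = F11 (ξ, y) := by
    intro ξ y
    have h : deriv (fun s => T s y) = fun s => F1 (s, y) := funext fun s => hd1 s y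
    rw [h]
    exact (hasDerivAt_pdX hF1s ξ y).deriv
  have hd2 : ∀ ξ y, deriv (fun s => T ξ s) y = F2 (ξ, y) := fun ξ y =>
    (hasDerivAt_pdY hTsmooth ξ y).deriv
  have hd22 : ∀ ξ y, deriv (deriv (fun s => T ξ s)) y = F22 (ξ, y) := by
    intro ξ y
    have h : deriv (fun s => T ξ s) = fun s => F2 (ξ, s) := funext fun s => hd2 ξ s
    rw [h]
    exact (hasDerivAt_pdY hF2s ξ y).deriv
  have hpde' : ∀ ξ y, c * f (T ξ y)
      = A * (u y - ubar) * F1 (ξ, y) - κ * F11 (ξ, y) - κ * F22 (ξ, y) := by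
    intro ξ y
    have h := hpde ξ y
    rw [hd1, hd11, hd22] at h
    have hexp : κ * (F11 (ξ, y) + F22 (ξ, y)) = κ * F11 (ξ, y) + κ * F22 (ξ, y) := mul_add _ _ _
    rw [hexp] at h
    linarith
  -- periodicity of F2
  have hF2per : ∀ ξ y, F2 (ξ, y + H) = F2 (ξ, y) := by
    intro ξ y
    have h1 := hasDerivAt_pdY hTsmooth ξ y
    have h2 := hasDerivAt_pdY hTsmooth ξ (y + H)
    have h3 : HasDerivAt (fun s : ℝ => F (ξ, s + H)) (F2 (ξ, y + H) * 1) y :=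
      by have := h2.comp y ((hasDerivAt_id' y).add_const H); exact this
    have h4 : (fun s : ℝ => F (ξ, s + H)) = fun s => F (ξ, s) :=
      funext fun s => hTper ξ s
    rw [h4] at h3
    have h5 := h3.unique h1
    rw [mul_one] at h5
    exact h5
  -- shifted derivative in the first variable
  have hshift : ∀ (e y ζ : ℝ), HasDerivAt (fun z => T (e + z) y) (F1 (e + ζ, y)) ζ := by
    intro e y ζ
    have hg : HasDerivAt (fun z : ℝ => e + z) 1 ζ := by
      simpa using (hasDerivAt_id' ζ).const_add e
    have h : HasDerivAt (fun z : ℝ => T (e + z) y) (F1 (e + ζ, y) * 1) ζ :=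
      (hasDerivAt_pdX hTsmooth (e + ζ) y).comp ζ hg
    simpa using h
  -- interval integrability of continuous slices
  have hF1int : ∀ (y a b : ℝ), IntervalIntegrable (fun ξ => F1 (ξ, y)) volume a b :=
    fun y a b => (hF1c.comp (continuous_id.prodMk continuous_const)).intervalIntegrable a b
  have hF11int : ∀ (y a b : ℝ), IntervalIntegrable (fun ξ => F11 (ξ, y)) volume a b :=
    fun y a b => (hF11c.comp (continuous_id.prodMk continuous_const)).intervalIntegrable a b
  have hF22int : ∀ (y a b : ℝ), IntervalIntegrable (fun ξ => F22 (ξ, y)) volume a b :=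
    fun y a b => (hF22c.comp (continuous_id.prodMk continuous_const)).intervalIntegrable a b
  -- FTC identities
  have hFTC1 : ∀ (y a b : ℝ), ∫ ξ in a..b, F1 (ξ, y) = T b y - T a y := fun y a b =>
    intervalIntegral.integral_eq_sub_of_hasDerivAt
      (fun ξ _ => hasDerivAt_pdX hTsmooth ξ y) (hF1int y a b)
  have hFTC11 : ∀ (y a b : ℝ), ∫ ξ in a..b, F11 (ξ, y) = F1 (b, y) - F1 (a, y) := fun y a b =>
    intervalIntegral.integral_eq_sub_of_hasDerivAt
      (fun ξ _ => hasDerivAt_pdX hF1s ξ y) (hF11int y a b)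
  have hFTC22 : ∀ ξ : ℝ, ∫ y in (0:ℝ)..H, F22 (ξ, y) = 0 := by
    intro ξ
    have h := intervalIntegral.integral_eq_sub_of_hasDerivAt
      (f := fun s => F2 (ξ, s)) (f' := fun y => F22 (ξ, y))
      (fun y _ => hasDerivAt_pdY hF2s ξ y)
      ((hF22c.comp (continuous_const.prodMk continuous_id)).intervalIntegrable 0 H)
    rw [h]
    show F2 (ξ, H) - F2 (ξ, 0) = 0
    have h0 := hF2per ξ 0
    rw [zero_add] at h0
    rw [h0, sub_self]
  have hFTCshift : ∀ (e y : ℝ), ∫ ζ in (0:ℝ)..l, F1 (e + ζ, y) = T (e + l) y - T (e + 0) y := by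
    intro e y
    exact intervalIntegral.integral_eq_sub_of_hasDerivAt (fun ζ _ => hshift e y ζ)
      ((hF1c.comp ((continuous_const.add continuous_id).prodMk continuous_const)).intervalIntegrable 0 l)
  -- continuity of the reaction term
  obtain ⟨Kf, hKf⟩ := hfLip
  have hfTc : Continuous (fun p : ℝ × ℝ => f (T p.1 p.2)) :=
    hKf.continuousOn.comp_continuous hFc fun p => Set.mem_Icc.mpr ⟨hT0 _ _, hT1 _ _⟩
  have hfT0 : ∀ ξ y, 0 ≤ f (T ξ y) := fun ξ y => hf0 _ (hT0 ξ y) (hT1 ξ y)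
  have hTbd : ∀ ξ ξ' y y' : ℝ, |T ξ y - T ξ' y'| ≤ 1 := by
    intro ξ ξ' y y'
    rw [abs_le]
    constructor <;> nlinarith [hT0 ξ y, hT1 ξ y, hT0 ξ' y', hT1 ξ' y']
  have hCu0 : 0 ≤ Cu := le_trans (abs_nonneg _) (hCu 0)
  have habs0 : 0 ≤ |ubar| + Cu := add_nonneg (abs_nonneg _) hCu0
  -- inner y-slice continuity for parametric integrals of c * f(T)
  have hinner_cont : ∀ a b : ℝ, Continuous (fun y => ∫ ξ in a..b, c * f (T ξ y)) := by
    intro a b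
    exact intervalIntegral.continuous_parametric_intervalIntegral_of_continuous'
      (f := fun y ξ => c * f (T ξ y))
      (continuous_const.mul (hfTc.comp (continuous_snd.prodMk continuous_fst))) a b
  have hinner_cont' : ∀ a b : ℝ, Continuous (fun y => ∫ ξ in a..b, f (T ξ y)) := by
    intro a b
    exact intervalIntegral.continuous_parametric_intervalIntegral_of_continuous'
      (f := fun y ξ => f (T ξ y))
      (hfTc.comp (continuous_snd.prodMk continuous_fst)) a b
  -- MAIN BOUND (part 2)
  have key2 : ∀ L : ℝ, l ≤ L →
      c * ∫ y in (0:ℝ)..H, ∫ ξ in (-L + l)..L, f (T ξ y)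
        ≤ 4 * κ * H / l + 2 * H * A * (|ubar| + Cu) := by
    intro L hL
    have hLpos : 0 < L := lt_of_lt_of_le hl hL
    -- Step A
    have stepA : ∀ ζ y : ℝ, (∫ ξ in (-L + ζ)..(L + ζ), c * f (T ξ y))
        = A * (u y - ubar) * (T (L + ζ) y - T (-L + ζ) y)
          - κ * (F1 (L + ζ, y) - F1 (-L + ζ, y))
          - κ * (∫ ξ in (-L + ζ)..(L + ζ), F22 (ξ, y)) := by
      intro ζ y
      have hcongr : (∫ ξ in (-L + ζ)..(L + ζ), c * f (T ξ y))
          = ∫ ξ in (-L + ζ)..(L + ζ),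
              (A * (u y - ubar) * F1 (ξ, y) - κ * F11 (ξ, y) - κ * F22 (ξ, y)) :=
        intervalIntegral.integral_congr fun ξ _ => hpde' ξ y
      rw [hcongr,
        intervalIntegral.integral_sub
          (((hF1int y _ _).const_mul (A * (u y - ubar))).sub ((hF11int y _ _).const_mul κ))
          ((hF22int y _ _).const_mul κ),
        intervalIntegral.integral_sub ((hF1int y _ _).const_mul (A * (u y - ubar)))
          ((hF11int y _ _).const_mul κ),
        intervalIntegral.integral_const_mul, intervalIntegral.integral_const_mul,
        intervalIntegral.integral_const_mul, hFTC11, hFTC1]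
    -- Step B
    have stepB : ∀ ζ : ℝ, (∫ y in (0:ℝ)..H, ∫ ξ in (-L + ζ)..(L + ζ), c * f (T ξ y))
        = A * (∫ y in (0:ℝ)..H, ((u y - ubar) * (T (L + ζ) y - T (-L + ζ) y)))
          - κ * ∫ y in (0:ℝ)..H, (F1 (L + ζ, y) - F1 (-L + ζ, y)) := by
      intro ζ
      have hab : -L + ζ ≤ L + ζ := by linarith
      have hcont1 : Continuous (fun y => F1 (L + ζ, y) - F1 (-L + ζ, y)) :=
        (hF1c.comp (continuous_const.prodMk continuous_id)).sub
          (hF1c.comp (continuous_const.prodMk continuous_id))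
      have hcont2 : Continuous (fun y => ∫ ξ in (-L + ζ)..(L + ζ), F22 (ξ, y)) :=
        intervalIntegral.continuous_parametric_intervalIntegral_of_continuous'
          (f := fun y ξ => F22 (ξ, y))
          (hF22c.comp (continuous_snd.prodMk continuous_fst)) _ _
      have hcont3 : Continuous (fun y => (u y - ubar) * (T (L + ζ) y - T (-L + ζ) y)) := by
        apply (hu.sub continuous_const).mul
        exact (hFc.comp (continuous_const.prodMk continuous_id)).sub
          (hFc.comp (continuous_const.prodMk continuous_id))
      have e1 : (∫ y in (0:ℝ)..H, ∫ ξ in (-L + ζ)..(L + ζ), c * f (T ξ y))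
          = ∫ y in (0:ℝ)..H,
              (A * ((u y - ubar) * (T (L + ζ) y - T (-L + ζ) y))
                - κ * (F1 (L + ζ, y) - F1 (-L + ζ, y))
                - κ * (∫ ξ in (-L + ζ)..(L + ζ), F22 (ξ, y))) := by
        refine intervalIntegral.integral_congr fun y _ => ?_
        rw [stepA ζ y]; ring
      rw [e1,
        intervalIntegral.integral_sub
          (((hcont3.intervalIntegrable 0 H).const_mul A).sub
            ((hcont1.intervalIntegrable 0 H).const_mul κ))
          ((hcont2.intervalIntegrable 0 H).const_mul κ),
        intervalIntegral.integral_sub ((hcont3.intervalIntegrable 0 H).const_mul A)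
          ((hcont1.intervalIntegrable 0 H).const_mul κ),
        intervalIntegral.integral_const_mul, intervalIntegral.integral_const_mul,
        intervalIntegral.integral_const_mul]
      have hzero : (∫ y in (0:ℝ)..H, ∫ ξ in (-L + ζ)..(L + ζ), F22 (ξ, y)) = 0 := by
        have hswap := swapCont (fun p => F22 (p.2, p.1))
          (hF22c.comp (continuous_snd.prodMk continuous_fst)) hH.le hab
        rw [hswap]
        rw [intervalIntegral.integral_congr (g := fun _ => (0:ℝ)) fun ξ _ => hFTC22 ξ]
        simp
      rw [hzero]
      ring
    -- continuity of P and Q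
    have hPcont : Continuous (fun ζ => ∫ y in (0:ℝ)..H, (F1 (L + ζ, y) - F1 (-L + ζ, y))) := by
      apply intervalIntegral.continuous_parametric_intervalIntegral_of_continuous'
        (f := fun ζ y => F1 (L + ζ, y) - F1 (-L + ζ, y))
      exact (hF1c.comp ((continuous_const.add continuous_fst).prodMk continuous_snd)).sub
        (hF1c.comp ((continuous_const.add continuous_fst).prodMk continuous_snd))
    have hQcont : Continuous
        (fun ζ => ∫ y in (0:ℝ)..H, ((u y - ubar) * (T (L + ζ) y - T (-L + ζ) y))) := by
      apply intervalIntegral.continuous_parametric_intervalIntegral_of_continuous'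
        (f := fun ζ y => (u y - ubar) * (T (L + ζ) y - T (-L + ζ) y))
      apply ((hu.comp continuous_snd).sub continuous_const).mul
      exact (hFc.comp ((continuous_const.add continuous_fst).prodMk continuous_snd)).sub
        (hFc.comp ((continuous_const.add continuous_fst).prodMk continuous_snd))
    -- pointwise inequality in ζ
    have hJle : ∀ ζ ∈ Set.Icc (0:ℝ) l,
        c * (∫ y in (0:ℝ)..H, ∫ ξ in (-L + l)..L, f (T ξ y))
          ≤ A * (∫ y in (0:ℝ)..H, ((u y - ubar) * (T (L + ζ) y - T (-L + ζ) y)))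
            - κ * ∫ y in (0:ℝ)..H, (F1 (L + ζ, y) - F1 (-L + ζ, y)) := by
      intro ζ hζ
      have e1 : c * (∫ y in (0:ℝ)..H, ∫ ξ in (-L + l)..L, f (T ξ y))
          = ∫ y in (0:ℝ)..H, ∫ ξ in (-L + l)..L, c * f (T ξ y) := by
        rw [← intervalIntegral.integral_const_mul]
        exact intervalIntegral.integral_congr fun y _ =>
          (intervalIntegral.integral_const_mul _ _).symm
      rw [e1, ← stepB ζ]
      apply intervalIntegral.integral_mono_on hH.le
        ((hinner_cont _ _).intervalIntegrable 0 H) ((hinner_cont _ _).intervalIntegrable 0 H)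
      intro y _
      apply intervalIntegral.integral_mono_interval
        (by linarith [hζ.2] : -L + ζ ≤ -L + l) (by linarith : -L + l ≤ L)
        (by linarith [hζ.1] : L ≤ L + ζ)
        (Filter.Eventually.of_forall fun ξ => mul_nonneg hc.le (hfT0 ξ y))
        (((continuous_const.mul (hfTc.comp (continuous_id.prodMk continuous_const))
          : Continuous fun ξ => c * f (T ξ y))).intervalIntegrable _ _)
    -- average over ζ in [0, l]
    have havg : l * (c * (∫ y in (0:ℝ)..H, ∫ ξ in (-L + l)..L, f (T ξ y)))
        ≤ A * (∫ ζ in (0:ℝ)..l,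
              ∫ y in (0:ℝ)..H, ((u y - ubar) * (T (L + ζ) y - T (-L + ζ) y)))
          - κ * (∫ ζ in (0:ℝ)..l, ∫ y in (0:ℝ)..H, (F1 (L + ζ, y) - F1 (-L + ζ, y))) := by
      have h1 := intervalIntegral.integral_mono_on hl.le
        (intervalIntegrable_const :
          IntervalIntegrable (fun _ => c * (∫ y in (0:ℝ)..H, ∫ ξ in (-L + l)..L, f (T ξ y)))
            volume 0 l)
        ((((continuous_const.mul hQcont).sub (continuous_const.mul hPcont))).intervalIntegrable 0 l) hJle
      rw [intervalIntegral.integral_const] at h1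
      simp only [Pi.sub_apply, Pi.mul_apply] at h1
      rw [intervalIntegral.integral_sub ((hQcont.intervalIntegrable 0 l).const_mul A)
        ((hPcont.intervalIntegrable 0 l).const_mul κ),
        intervalIntegral.integral_const_mul, intervalIntegral.integral_const_mul] at h1
      simpa [sub_zero, smul_eq_mul] using h1
    -- bound the P-average
    have hPbound : |∫ ζ in (0:ℝ)..l, ∫ y in (0:ℝ)..H, (F1 (L + ζ, y) - F1 (-L + ζ, y))| ≤ 2 * H := by
      have hswap := swapCont (fun p => F1 (L + p.1, p.2) - F1 (-L + p.1, p.2))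
        ((hF1c.comp ((continuous_const.add continuous_fst).prodMk continuous_snd)).sub
          (hF1c.comp ((continuous_const.add continuous_fst).prodMk continuous_snd)))
        hl.le hH.le
      rw [hswap]
      have e2 : ∀ y : ℝ, (∫ ζ in (0:ℝ)..l, (F1 (L + ζ, y) - F1 (-L + ζ, y)))
          = (T (L + l) y - T (L + 0) y) - (T (-L + l) y - T (-L + 0) y) := by
        intro y
        have i1 : IntervalIntegrable (fun ζ => F1 (L + ζ, y)) volume 0 l :=
          (hF1c.comp ((continuous_const.add continuous_id).prodMk
            continuous_const)).intervalIntegrable 0 l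
        have i2 : IntervalIntegrable (fun ζ => F1 (-L + ζ, y)) volume 0 l :=
          (hF1c.comp ((continuous_const.add continuous_id).prodMk
            continuous_const)).intervalIntegrable 0 l
        rw [intervalIntegral.integral_sub i1 i2, hFTCshift L y, hFTCshift (-L) y]
      rw [intervalIntegral.integral_congr (fun y _ => e2 y)]
      have hb := intervalIntegral.norm_integral_le_of_norm_le_const (C := 2)
        (f := fun y => (T (L + l) y - T (L + 0) y) - (T (-L + l) y - T (-L + 0) y))
        (a := 0) (b := H) ?_
      · rw [Real.norm_eq_abs] at hb
        calc |∫ y in (0:ℝ)..H, ((T (L + l) y - T (L + 0) y) - (T (-L + l) y - T (-L + 0) y))|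
            ≤ 2 * |H - 0| := hb
          _ = 2 * H := by rw [sub_zero, abs_of_nonneg hH.le]
      · intro y _
        show ‖(T (L + l) y - T (L + 0) y) - (T (-L + l) y - T (-L + 0) y)‖ ≤ 2
        rw [Real.norm_eq_abs]
        have h1 := hTbd (L + l) (L + 0) y y
        have h2 := hTbd (-L + l) (-L + 0) y y
        rw [abs_le] at h1 h2 ⊢
        constructor <;> [linarith [h1.1, h2.2]; linarith [h1.2, h2.1]]
    -- bound the Q term
    have hQbound : ∀ ζ : ℝ,
        |∫ y in (0:ℝ)..H, ((u y - ubar) * (T (L + ζ) y - T (-L + ζ) y))| ≤ (|ubar| + Cu) * H := by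
      intro ζ
      have hb := intervalIntegral.norm_integral_le_of_norm_le_const (C := |ubar| + Cu)
        (f := fun y => (u y - ubar) * (T (L + ζ) y - T (-L + ζ) y)) (a := 0) (b := H) ?_
      · rw [Real.norm_eq_abs] at hb
        calc |∫ y in (0:ℝ)..H, ((u y - ubar) * (T (L + ζ) y - T (-L + ζ) y))|
            ≤ (|ubar| + Cu) * |H - 0| := hb
          _ = (|ubar| + Cu) * H := by rw [sub_zero, abs_of_nonneg hH.le]
      · intro y _
        show ‖(u y - ubar) * (T (L + ζ) y - T (-L + ζ) y)‖ ≤ |ubar| + Cu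
        rw [Real.norm_eq_abs, abs_mul]
        have h1 : |u y - ubar| ≤ |ubar| + Cu := by
          have h2 := abs_le.mp (hCu y)
          rw [abs_le]
          constructor <;> linarith [neg_abs_le ubar, le_abs_self ubar, h2.1, h2.2]
        calc |u y - ubar| * |T (L + ζ) y - T (-L + ζ) y|
            ≤ (|ubar| + Cu) * 1 := mul_le_mul h1 (hTbd _ _ _ _) (abs_nonneg _) habs0
          _ = |ubar| + Cu := mul_one _
    have hQint : |∫ ζ in (0:ℝ)..l,
        ∫ y in (0:ℝ)..H, ((u y - ubar) * (T (L + ζ) y - T (-L + ζ) y))| ≤ (|ubar| + Cu) * H * l := by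
      have hb := intervalIntegral.norm_integral_le_of_norm_le_const (C := (|ubar| + Cu) * H)
        (f := fun ζ => ∫ y in (0:ℝ)..H, ((u y - ubar) * (T (L + ζ) y - T (-L + ζ) y)))
        (a := 0) (b := l) fun ζ _ => by rw [Real.norm_eq_abs]; exact hQbound ζ
      rw [Real.norm_eq_abs] at hb
      calc _ ≤ (|ubar| + Cu) * H * |l - 0| := hb
        _ = (|ubar| + Cu) * H * l := by rw [sub_zero, abs_of_nonneg hl.le]
    -- combine
    set J := ∫ y in (0:ℝ)..H, ∫ ξ in (-L + l)..L, f (T ξ y) with hJdef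
    have hchain : l * (c * J) ≤ κ * (2 * H) + A * ((|ubar| + Cu) * H * l) := by
      have hP' := abs_le.mp hPbound
      have hQ' := abs_le.mp hQint
      nlinarith [havg, hP'.1, hQ'.2, hκ.le, hA.le]
    have hfinal : c * J * l ≤ (4 * κ * H / l + 2 * H * A * (|ubar| + Cu)) * l := by
      have hκH : 0 ≤ κ * H := mul_nonneg hκ.le hH.le
      have hAH : 0 ≤ A * ((|ubar| + Cu) * H * l) := by positivity
      have hdiv : 4 * κ * H / l * l = 4 * κ * H := div_mul_cancel₀ _ (ne_of_gt hl)
      nlinarith [hchain]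
    exact le_of_mul_le_mul_right (by linarith [hfinal]) hl
  -- PART 1: integrability
  refine ⟨?_, key2⟩
  set g : ℝ × ℝ → ℝ := fun p => f (T p.1 p.2) with hg_def
  have hg0 : ∀ p, 0 ≤ g p := fun p => hfT0 p.1 p.2
  set B : ℝ := (4 * κ * H / l + 2 * H * A * (|ubar| + Cu)) / c with hB_def
  -- uniform bound on rectangles
  have hrect : ∀ n : ℕ, ∫ p in Set.Icc (-(n:ℝ)) n ×ˢ Set.Icc (0:ℝ) H, g p ≤ B := by
    intro n
    have hn0 : (0:ℝ) ≤ n := Nat.cast_nonneg n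
    have hInt : IntegrableOn g (Set.Icc (-(n:ℝ)) n ×ˢ Set.Icc (0:ℝ) H) :=
      (hfTc.continuousOn).integrableOn_compact (isCompact_Icc.prod isCompact_Icc)
    have hLn : l ≤ (n:ℝ) + l := by linarith
    have hk := key2 ((n:ℝ) + l) hLn
    have hneg : -((n:ℝ) + l) + l = -(n:ℝ) := by ring
    rw [hneg] at hk
    have step1 : ∫ p in Set.Icc (-(n:ℝ)) n ×ˢ Set.Icc (0:ℝ) H, g p
        = ∫ x in (-(n:ℝ))..n, ∫ y in (0:ℝ)..H, g (x, y) := by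
      rw [Measure.volume_eq_prod ℝ ℝ] at hInt ⊢
      rw [MeasureTheory.setIntegral_prod _ hInt]
      rw [intervalIntegral.integral_of_le (by linarith : -(n:ℝ) ≤ n),
        ← MeasureTheory.integral_Icc_eq_integral_Ioc]
      refine MeasureTheory.setIntegral_congr_fun measurableSet_Icc fun x _ => ?_
      rw [intervalIntegral.integral_of_le hH.le, ← MeasureTheory.integral_Icc_eq_integral_Ioc]
    have step2 : (∫ x in (-(n:ℝ))..n, ∫ y in (0:ℝ)..H, g (x, y))
        = ∫ y in (0:ℝ)..H, ∫ x in (-(n:ℝ))..n, g (x, y) :=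
      swapCont g hfTc (by linarith) hH.le
    have step3 : (∫ y in (0:ℝ)..H, ∫ x in (-(n:ℝ))..n, g (x, y))
        ≤ ∫ y in (0:ℝ)..H, ∫ x in (-(n:ℝ))..((n:ℝ) + l), g (x, y) := by
      apply intervalIntegral.integral_mono_on hH.le
        ((hinner_cont' _ _).intervalIntegrable 0 H) ((hinner_cont' _ _).intervalIntegrable 0 H)
      intro y _
      apply intervalIntegral.integral_mono_interval (le_refl (-(n:ℝ)))
        (by linarith : -(n:ℝ) ≤ (n:ℝ)) (by linarith : (n:ℝ) ≤ (n:ℝ) + l)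
        (Filter.Eventually.of_forall fun ξ => hfT0 ξ y)
        ((hfTc.comp (continuous_id.prodMk continuous_const)).intervalIntegrable _ _)
    have hkk : (∫ y in (0:ℝ)..H, ∫ x in (-(n:ℝ))..((n:ℝ) + l), g (x, y)) ≤ B := by
      rw [hB_def, le_div_iff₀ hc]
      calc (∫ y in (0:ℝ)..H, ∫ x in (-(n:ℝ))..((n:ℝ) + l), g (x, y)) * c
          = c * ∫ y in (0:ℝ)..H, ∫ x in (-(n:ℝ))..((n:ℝ) + l), f (T x y) := by rw [mul_comm]
        _ ≤ 4 * κ * H / l + 2 * H * A * (|ubar| + Cu) := hk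
    calc ∫ p in Set.Icc (-(n:ℝ)) n ×ˢ Set.Icc (0:ℝ) H, g p
        = ∫ y in (0:ℝ)..H, ∫ x in (-(n:ℝ))..n, g (x, y) := by rw [step1, step2]
      _ ≤ ∫ y in (0:ℝ)..H, ∫ x in (-(n:ℝ))..((n:ℝ) + l), g (x, y) := step3
      _ ≤ B := hkk
  -- monotone union
  set s : ℕ → Set (ℝ × ℝ) := fun n => Set.Icc (-(n:ℝ)) n ×ˢ Set.Icc (0:ℝ) H with hs_def
  have hsmono : Monotone s := by
    intro m n hmn
    exact Set.prod_mono (Set.Icc_subset_Icc (by exact_mod_cast neg_le_neg (Nat.cast_le.mpr hmn))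
      (by exact_mod_cast Nat.cast_le.mpr hmn)) subset_rfl
  have hsdir : Directed (· ⊆ ·) s := hsmono.directed_le
  have hsunion : (⋃ n, s n) = Set.univ ×ˢ Set.Icc (0:ℝ) H := by
    ext ⟨x, y⟩
    simp only [Set.mem_iUnion, Set.mem_prod, Set.mem_Icc, Set.mem_univ, true_and, hs_def]
    constructor
    · rintro ⟨n, _, hy⟩; exact hy
    · intro hy
      obtain ⟨n, hn⟩ := exists_nat_ge |x|
      exact ⟨n, ⟨neg_le_of_abs_le hn, le_of_abs_le hn⟩, hy⟩
  constructor
  · exact hfTc.aestronglyMeasurable.restrict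
  · rw [MeasureTheory.hasFiniteIntegral_iff_norm]
    have hnorm : ∀ p : ℝ × ℝ, ENNReal.ofReal ‖g p‖ = ENNReal.ofReal (g p) := fun p => by
      rw [Real.norm_of_nonneg (hg0 p)]
    calc ∫⁻ p in Set.univ ×ˢ Set.Icc (0:ℝ) H, ENNReal.ofReal ‖g p‖
        = ∫⁻ p in ⋃ n, s n, ENNReal.ofReal (g p) := by
          rw [hsunion]; exact lintegral_congr fun p => hnorm p
      _ = ⨆ n, ∫⁻ p in s n, ENNReal.ofReal (g p) :=
          MeasureTheory.setLIntegral_iUnion_of_directed _ hsdir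
      _ ≤ ENNReal.ofReal B := by
          refine iSup_le fun n => ?_
          have hIn : IntegrableOn g (s n) :=
            (hfTc.continuousOn).integrableOn_compact (isCompact_Icc.prod isCompact_Icc)
          rw [← MeasureTheory.ofReal_integral_eq_lintegral_ofReal hIn
            (Filter.Eventually.of_forall fun p => hg0 p)]
          exact ENNReal.ofReal_le_ofReal (hrect n)
      _ < ⊤ := ENNReal.ofReal_lt_top
end

section
/- Let 0 ≤ T̄ ≤ 1 solve the stationary equation A(u(y)-ū)T̄_ξ = κΔT̄ + (v₀²/κ)f(T̄) on D = ℝ × [0,H] (periodic in y), with ∫∫_D f(T̄) < ∞. Then ∫∫_D |∇T̄|² dξdy < ∞. -/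
open Real MeasureTheory


private lemma pdx (F : ℝ × ℝ → ℝ) (hF : ContDiff ℝ (⊤ : ℕ∞) F) (ξ y : ℝ) :
    HasDerivAt (fun s => F (s, y)) (fderiv ℝ F (ξ, y) (1, 0)) ξ := by
  have h1 : HasFDerivAt F (fderiv ℝ F (ξ, y)) (ξ, y) :=
    (hF.differentiable (by simp) (ξ, y)).hasFDerivAt
  exact h1.comp_hasDerivAt ξ ((hasDerivAt_id ξ).prodMk (hasDerivAt_const ξ y))

private lemma pdy (F : ℝ × ℝ → ℝ) (hF : ContDiff ℝ (⊤ : ℕ∞) F) (ξ y : ℝ) :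
    HasDerivAt (fun s => F (ξ, s)) (fderiv ℝ F (ξ, y) (0, 1)) y := by
  have h1 : HasFDerivAt F (fderiv ℝ F (ξ, y)) (ξ, y) :=
    (hF.differentiable (by simp) (ξ, y)).hasFDerivAt
  exact h1.comp_hasDerivAt y ((hasDerivAt_const y ξ).prodMk (hasDerivAt_id y))

private lemma pdsmooth (F : ℝ × ℝ → ℝ) (hF : ContDiff ℝ (⊤ : ℕ∞) F) (v : ℝ × ℝ) :
    ContDiff ℝ (⊤ : ℕ∞) (fun q => fderiv ℝ F q v) :=
  (hF.fderiv_right (by simp)).clm_apply contDiff_const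

private lemma intOnBox {φ : ℝ × ℝ → ℝ} (hφ : Continuous φ) (a b c d : ℝ) :
    IntegrableOn φ (Set.Ioc a b ×ˢ Set.Ioc c d) := by
  have hcomp : IsCompact (Set.Icc a b ×ˢ Set.Icc c d) :=
    isCompact_Icc.prod isCompact_Icc
  exact (hφ.locallyIntegrable.integrableOn_isCompact hcomp).mono_set
    (Set.prod_mono Set.Ioc_subset_Icc_self Set.Ioc_subset_Icc_self)

private lemma box_eq {φ : ℝ × ℝ → ℝ} (hφ : Continuous φ) {a b c d : ℝ}
    (hab : a ≤ b) (hcd : c ≤ d) :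
    ∫ x in a..b, ∫ y in c..d, φ (x, y)
      = ∫ p in Set.Ioc a b ×ˢ Set.Ioc c d, φ p := by
  have hInt : IntegrableOn φ (Set.Ioc a b ×ˢ Set.Ioc c d) := intOnBox hφ a b c d
  rw [show (volume : Measure (ℝ × ℝ)) = (volume : Measure ℝ).prod volume from rfl] at hInt
  have := MeasureTheory.setIntegral_prod φ hInt
  simp only [intervalIntegral.integral_of_le hab, intervalIntegral.integral_of_le hcd]
  exact this.symm

private lemma swap_cont {φ : ℝ × ℝ → ℝ} (hφ : Continuous φ) {a b c d : ℝ}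
    (hab : a ≤ b) (hcd : c ≤ d) :
    ∫ y in c..d, ∫ x in a..b, φ (x, y) = ∫ x in a..b, ∫ y in c..d, φ (x, y) := by
  have h1 := box_eq hφ hab hcd
  have h2 := box_eq (φ := fun p : ℝ × ℝ => φ (p.2, p.1)) (by fun_prop) hcd hab
  rw [h1, h2]
  rw [show (volume : Measure (ℝ × ℝ)) = (volume : Measure ℝ).prod volume from rfl,
    ← Measure.prod_restrict, ← Measure.prod_restrict]
  rw [← MeasureTheory.integral_prod_swap (f := φ)]
  rfl

set_option maxHeartbeats 1000000 in
private lemma core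
    (Hh κ Ca : ℝ) (hH : 0 < Hh) (hκ : 0 < κ)
    (a : ℝ → ℝ) (ha : ∀ y, |a y| ≤ Ca) (hac : Continuous a)
    (T G Gy G2 H2 R : ℝ × ℝ → ℝ)
    (hTc : Continuous T) (hGc : Continuous G) (hGyc : Continuous Gy)
    (hG2c : Continuous G2) (hH2c : Continuous H2) (hRc : Continuous R)
    (hT0 : ∀ p, 0 ≤ T p) (hT1 : ∀ p, T p ≤ 1) (hR0 : ∀ p, 0 ≤ R p)
    (hGd : ∀ ξ y, HasDerivAt (fun s => T (s, y)) (G (ξ, y)) ξ)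
    (hGyd : ∀ ξ y, HasDerivAt (fun s => T (ξ, s)) (Gy (ξ, y)) y)
    (hG2d : ∀ ξ y, HasDerivAt (fun s => G (s, y)) (G2 (ξ, y)) ξ)
    (hH2d : ∀ ξ y, HasDerivAt (fun s => Gy (ξ, s)) (H2 (ξ, y)) y)
    (hper : ∀ ξ, T (ξ, Hh) = T (ξ, 0)) (hperG : ∀ ξ, Gy (ξ, Hh) = Gy (ξ, 0))
    (hpde : ∀ p : ℝ × ℝ, a p.2 * G p = κ * (G2 p + H2 p) + R p)
    (hRint : IntegrableOn R (Set.univ ×ˢ Set.Icc (0:ℝ) Hh)) :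
    IntegrableOn (fun p : ℝ × ℝ => G p ^ 2 + Gy p ^ 2)
      (Set.univ ×ˢ Set.Icc (0:ℝ) Hh) := by
  -- slice continuity
  have scx : ∀ (φ : ℝ × ℝ → ℝ), Continuous φ → ∀ y : ℝ, Continuous (fun s => φ (s, y)) :=
    fun φ hφ y => hφ.comp (continuous_id.prodMk continuous_const)
  have scy : ∀ (φ : ℝ × ℝ → ℝ), Continuous φ → ∀ ξ : ℝ, Continuous (fun s => φ (ξ, s)) :=
    fun φ hφ ξ => hφ.comp (continuous_const.prodMk continuous_id)
  set g : ℝ × ℝ → ℝ := fun p => G p ^ 2 + Gy p ^ 2 with hgdef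
  have hgc : Continuous g := (hGc.pow 2).add (hGyc.pow 2)
  have hg0 : ∀ p, 0 ≤ g p := fun p => add_nonneg (sq_nonneg _) (sq_nonneg _)
  -- FTC for T²/2
  have ftc : ∀ (y p q : ℝ), ∫ s in p..q, T (s, y) * G (s, y)
      = T (q, y) ^ 2 / 2 - T (p, y) ^ 2 / 2 := by
    intro y p q
    have h : ∀ s ∈ Set.uIcc p q,
        HasDerivAt (fun s => T (s, y) ^ 2 / 2) (T (s, y) * G (s, y)) s := by
      intro s _
      have := ((hGd s y).pow 2).div_const 2
      exact this.congr_deriv (by rw [show (2:ℕ) - 1 = 1 from rfl, pow_one]; push_cast; ring)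
    exact intervalIntegral.integral_eq_sub_of_hasDerivAt h
      (((scx T hTc y).mul (scx G hGc y)).intervalIntegrable _ _)
  -- ξ-integration by parts
  have ibp1 : ∀ (y L : ℝ), ∫ s in (-L)..L, T (s, y) * G2 (s, y)
      = T (L, y) * G (L, y) - T (-L, y) * G (-L, y) - ∫ s in (-L)..L, G (s, y) ^ 2 := by
    intro y L
    have h := intervalIntegral.integral_mul_deriv_eq_deriv_mul (a := -L) (b := L)
      (u := fun s => T (s, y)) (v := fun s => G (s, y))
      (u' := fun s => G (s, y)) (v' := fun s => G2 (s, y))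
      (fun x _ => hGd x y) (fun x _ => hG2d x y)
      ((scx G hGc y).intervalIntegrable _ _) ((scx G2 hG2c y).intervalIntegrable _ _)
    rw [h]
    congr 1
    apply intervalIntegral.integral_congr
    intro s _; ring
  -- y-integration by parts (boundary cancels by periodicity)
  have ibp2 : ∀ ξ : ℝ, ∫ s in (0:ℝ)..Hh, T (ξ, s) * H2 (ξ, s)
      = - ∫ s in (0:ℝ)..Hh, Gy (ξ, s) ^ 2 := by
    intro ξ
    have h := intervalIntegral.integral_mul_deriv_eq_deriv_mul (a := (0:ℝ)) (b := Hh)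
      (u := fun s => T (ξ, s)) (v := fun s => Gy (ξ, s))
      (u' := fun s => Gy (ξ, s)) (v' := fun s => H2 (ξ, s))
      (fun x _ => hGyd ξ x) (fun x _ => hH2d ξ x)
      ((scy Gy hGyc ξ).intervalIntegrable _ _) ((scy H2 hH2c ξ).intervalIntegrable _ _)
    rw [h]
    rw [hper, hperG]
    have : ∫ s in (0:ℝ)..Hh, Gy (ξ, s) * Gy (ξ, s) = ∫ s in (0:ℝ)..Hh, Gy (ξ, s) ^ 2 := by
      apply intervalIntegral.integral_congr; intro s _; ring
    rw [this]; ring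
  -- parametric continuity helper
  have pci : ∀ (φ : ℝ × ℝ → ℝ), Continuous φ → ∀ (p q : ℝ),
      Continuous (fun y => ∫ s in p..q, φ (s, y)) := by
    intro φ hφ p q
    exact intervalIntegral.continuous_parametric_intervalIntegral_of_continuous'
      (f := fun y s => φ (s, y)) (hφ.comp continuous_swap) p q
  set I : ℝ → ℝ := fun L => ∫ y in (0:ℝ)..Hh, ∫ s in (-L)..L, g (s, y) with hIdef
  set B : ℝ → ℝ := fun L =>
    ∫ y in (0:ℝ)..Hh, (T (L, y) * G (L, y) - T (-L, y) * G (-L, y)) with hBdef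
  set Rtot : ℝ := ∫ p in Set.univ ×ˢ Set.Icc (0:ℝ) Hh, R p with hRtotdef
  have hCa : 0 ≤ Ca := le_trans (abs_nonneg _) (ha 0)
  have hRtot0 : 0 ≤ Rtot :=
    setIntegral_nonneg (MeasurableSet.univ.prod measurableSet_Icc) (fun p _ => hR0 p)
  set C0 : ℝ := Rtot + Ca / 2 * Hh with hC0def
  have hC00 : 0 ≤ C0 := add_nonneg hRtot0 (by positivity)
  have key : ∀ L : ℝ, 0 ≤ L → κ * I L ≤ κ * B L + C0 := by
    intro L hL
    have hLL : -L ≤ L := neg_le_self hL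
    -- inner identity per y
    have hin : ∀ y : ℝ, a y * (T (L, y) ^ 2 / 2 - T (-L, y) ^ 2 / 2)
        = κ * (∫ s in (-L)..L, T (s, y) * G2 (s, y))
          + κ * (∫ s in (-L)..L, T (s, y) * H2 (s, y))
          + ∫ s in (-L)..L, T (s, y) * R (s, y) := by
      intro y
      calc a y * (T (L, y) ^ 2 / 2 - T (-L, y) ^ 2 / 2)
          = a y * ∫ s in (-L)..L, T (s, y) * G (s, y) := by rw [ftc y (-L) L]
        _ = ∫ s in (-L)..L, a y * (T (s, y) * G (s, y)) :=
            (intervalIntegral.integral_const_mul _ _).symm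
        _ = ∫ s in (-L)..L, (κ * (T (s, y) * G2 (s, y)) + κ * (T (s, y) * H2 (s, y))
              + T (s, y) * R (s, y)) := by
            apply intervalIntegral.integral_congr
            intro s _
            have hp := hpde (s, y)
            simp only at hp
            linear_combination T (s, y) * hp
        _ = (∫ s in (-L)..L, (κ * (T (s, y) * G2 (s, y)) + κ * (T (s, y) * H2 (s, y))))
              + ∫ s in (-L)..L, T (s, y) * R (s, y) := by
            apply intervalIntegral.integral_add
            · exact ((continuous_const.mul ((scx T hTc y).mul (scx G2 hG2c y))).add
                (continuous_const.mul ((scx T hTc y).mul (scx H2 hH2c y)))).intervalIntegrable _ _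
            · exact ((scx T hTc y).mul (scx R hRc y)).intervalIntegrable _ _
        _ = κ * (∫ s in (-L)..L, T (s, y) * G2 (s, y))
              + κ * (∫ s in (-L)..L, T (s, y) * H2 (s, y))
              + ∫ s in (-L)..L, T (s, y) * R (s, y) := by
            rw [intervalIntegral.integral_add (f := fun s => κ * (T (s, y) * G2 (s, y)))
                (g := fun s => κ * (T (s, y) * H2 (s, y)))
                ((continuous_const.mul ((scx T hTc y).mul (scx G2 hG2c y))).intervalIntegrable _ _)
                ((continuous_const.mul ((scx T hTc y).mul (scx H2 hH2c y))).intervalIntegrable _ _),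
              intervalIntegral.integral_const_mul, intervalIntegral.integral_const_mul]
    -- integrate over y
    have cJ2 : Continuous (fun y => ∫ s in (-L)..L, T (s, y) * G2 (s, y)) :=
      pci _ (hTc.mul hG2c) _ _
    have cJ3 : Continuous (fun y => ∫ s in (-L)..L, T (s, y) * H2 (s, y)) :=
      pci _ (hTc.mul hH2c) _ _
    have cJR : Continuous (fun y => ∫ s in (-L)..L, T (s, y) * R (s, y)) :=
      pci _ (hTc.mul hRc) _ _
    have hy : ∫ y in (0:ℝ)..Hh, a y * (T (L, y) ^ 2 / 2 - T (-L, y) ^ 2 / 2)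
        = κ * (∫ y in (0:ℝ)..Hh, ∫ s in (-L)..L, T (s, y) * G2 (s, y))
          + κ * (∫ y in (0:ℝ)..Hh, ∫ s in (-L)..L, T (s, y) * H2 (s, y))
          + ∫ y in (0:ℝ)..Hh, ∫ s in (-L)..L, T (s, y) * R (s, y) := by
      rw [show (fun y => a y * (T (L, y) ^ 2 / 2 - T (-L, y) ^ 2 / 2))
          = fun y => κ * (∫ s in (-L)..L, T (s, y) * G2 (s, y))
            + κ * (∫ s in (-L)..L, T (s, y) * H2 (s, y))
            + ∫ s in (-L)..L, T (s, y) * R (s, y) from funext hin]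
      rw [intervalIntegral.integral_add
          (f := fun y => κ * (∫ s in (-L)..L, T (s, y) * G2 (s, y))
            + κ * (∫ s in (-L)..L, T (s, y) * H2 (s, y)))
          (g := fun y => ∫ s in (-L)..L, T (s, y) * R (s, y))
          (((continuous_const.mul cJ2).add (continuous_const.mul cJ3)).intervalIntegrable _ _)
          (cJR.intervalIntegrable _ _),
        intervalIntegral.integral_add
          (f := fun y => κ * (∫ s in (-L)..L, T (s, y) * G2 (s, y)))
          (g := fun y => κ * (∫ s in (-L)..L, T (s, y) * H2 (s, y)))
          ((continuous_const.mul cJ2).intervalIntegrable _ _)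
          ((continuous_const.mul cJ3).intervalIntegrable _ _),
        intervalIntegral.integral_const_mul, intervalIntegral.integral_const_mul]
    -- identify the three double integrals
    have hJ2 : ∫ y in (0:ℝ)..Hh, ∫ s in (-L)..L, T (s, y) * G2 (s, y)
        = B L - ∫ y in (0:ℝ)..Hh, ∫ s in (-L)..L, G (s, y) ^ 2 := by
      have h1 : ∫ y in (0:ℝ)..Hh, ∫ s in (-L)..L, T (s, y) * G2 (s, y)
          = ∫ y in (0:ℝ)..Hh, ((T (L, y) * G (L, y) - T (-L, y) * G (-L, y))
              - ∫ s in (-L)..L, G (s, y) ^ 2) := by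
        apply intervalIntegral.integral_congr
        intro y _
        simp only []
        rw [ibp1 y L]
      rw [h1, intervalIntegral.integral_sub
        (f := fun y => T (L, y) * G (L, y) - T (-L, y) * G (-L, y))
        (g := fun y => ∫ s in (-L)..L, G (s, y) ^ 2)
        ((((scy T hTc L).mul (scy G hGc L)).sub
          ((scy T hTc (-L)).mul (scy G hGc (-L)))).intervalIntegrable _ _)
        ((pci _ (hGc.pow 2) _ _).intervalIntegrable _ _)]
    have hJ3 : ∫ y in (0:ℝ)..Hh, ∫ s in (-L)..L, T (s, y) * H2 (s, y)
        = - ∫ y in (0:ℝ)..Hh, ∫ s in (-L)..L, Gy (s, y) ^ 2 := by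
      rw [swap_cont (φ := fun p : ℝ × ℝ => T p * H2 p) (hTc.mul hH2c) hLL hH.le]
      have h1 : ∫ x in (-L)..L, ∫ y in (0:ℝ)..Hh, T (x, y) * H2 (x, y)
          = ∫ x in (-L)..L, - ∫ s in (0:ℝ)..Hh, Gy (x, s) ^ 2 :=
        intervalIntegral.integral_congr (fun x _ => ibp2 x)
      rw [h1, intervalIntegral.integral_neg,
        ← swap_cont (φ := fun p : ℝ × ℝ => Gy p ^ 2) (hGyc.pow 2) hLL hH.le]
    have hIL : I L = (∫ y in (0:ℝ)..Hh, ∫ s in (-L)..L, G (s, y) ^ 2)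
        + ∫ y in (0:ℝ)..Hh, ∫ s in (-L)..L, Gy (s, y) ^ 2 := by
      have h1 : I L = ∫ y in (0:ℝ)..Hh,
          ((∫ s in (-L)..L, G (s, y) ^ 2) + ∫ s in (-L)..L, Gy (s, y) ^ 2) := by
        apply intervalIntegral.integral_congr
        intro y _
        exact intervalIntegral.integral_add
          ((scx _ (hGc.pow 2) y).intervalIntegrable _ _)
          ((scx _ (hGyc.pow 2) y).intervalIntegrable _ _)
      rw [h1, intervalIntegral.integral_add
        (f := fun y => ∫ s in (-L)..L, G (s, y) ^ 2)
        (g := fun y => ∫ s in (-L)..L, Gy (s, y) ^ 2)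
        ((pci _ (hGc.pow 2) _ _).intervalIntegrable _ _)
        ((pci _ (hGyc.pow 2) _ _).intervalIntegrable _ _)]
    -- bound the reaction term
    have hQbd : ∫ y in (0:ℝ)..Hh, ∫ s in (-L)..L, T (s, y) * R (s, y) ≤ Rtot := by
      have h1 : ∫ y in (0:ℝ)..Hh, ∫ s in (-L)..L, T (s, y) * R (s, y)
          ≤ ∫ y in (0:ℝ)..Hh, ∫ s in (-L)..L, R (s, y) := by
        apply intervalIntegral.integral_mono_on hH.le
          (cJR.intervalIntegrable _ _) ((pci _ hRc _ _).intervalIntegrable _ _)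
        intro y _
        apply intervalIntegral.integral_mono_on hLL
          (((scx T hTc y).mul (scx R hRc y)).intervalIntegrable _ _)
          ((scx _ hRc y).intervalIntegrable _ _)
        intro s _
        show T (s, y) * R (s, y) ≤ R (s, y)
        nlinarith [hT0 (s, y), hT1 (s, y), hR0 (s, y)]
      have h2 : ∫ y in (0:ℝ)..Hh, ∫ s in (-L)..L, R (s, y)
          = ∫ p in Set.Ioc (-L) L ×ˢ Set.Ioc (0:ℝ) Hh, R p := by
        rw [swap_cont (φ := R) hRc hLL hH.le, box_eq hRc hLL hH.le]
      have h3 : ∫ p in Set.Ioc (-L) L ×ˢ Set.Ioc (0:ℝ) Hh, R p ≤ Rtot := by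
        apply setIntegral_mono_set hRint (Filter.Eventually.of_forall hR0)
        exact HasSubset.Subset.eventuallyLE
          (Set.prod_mono (Set.subset_univ _) Set.Ioc_subset_Icc_self)
      linarith
    have hQ0 : 0 ≤ ∫ y in (0:ℝ)..Hh, ∫ s in (-L)..L, T (s, y) * R (s, y) := by
      apply intervalIntegral.integral_nonneg hH.le
      intro y _
      apply intervalIntegral.integral_nonneg hLL
      intro s _
      exact mul_nonneg (hT0 _) (hR0 _)
    -- bound the advection term
    have hE1 : |∫ y in (0:ℝ)..Hh, a y * (T (L, y) ^ 2 / 2 - T (-L, y) ^ 2 / 2)|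
        ≤ Ca / 2 * Hh := by
      have h := intervalIntegral.norm_integral_le_of_norm_le_const (C := Ca / 2)
        (f := fun y => a y * (T (L, y) ^ 2 / 2 - T (-L, y) ^ 2 / 2))
        (a := (0:ℝ)) (b := Hh) ?_
      · rw [Real.norm_eq_abs] at h
        simpa [abs_of_nonneg hH.le] using h
      · intro y _
        rw [Real.norm_eq_abs, abs_mul]
        have h2 : |T (L, y) ^ 2 / 2 - T (-L, y) ^ 2 / 2| ≤ 1 / 2 := by
          apply abs_le.2
          constructor
          · nlinarith [hT0 (L, y), hT1 (L, y), hT0 (-L, y), hT1 (-L, y)]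
          · nlinarith [hT0 (L, y), hT1 (L, y), hT0 (-L, y), hT1 (-L, y)]
        calc |a y| * |T (L, y) ^ 2 / 2 - T (-L, y) ^ 2 / 2| ≤ Ca * (1 / 2) :=
              mul_le_mul (ha y) h2 (abs_nonneg _) hCa
          _ = Ca / 2 := by ring
    have habs := abs_le.1 hE1
    rw [hJ2, hJ3] at hy
    rw [hIL]
    have heq : κ * ((∫ y in (0:ℝ)..Hh, ∫ s in (-L)..L, G (s, y) ^ 2)
        + ∫ y in (0:ℝ)..Hh, ∫ s in (-L)..L, Gy (s, y) ^ 2)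
        = κ * B L + (∫ y in (0:ℝ)..Hh, ∫ s in (-L)..L, T (s, y) * R (s, y))
          - ∫ y in (0:ℝ)..Hh, a y * (T (L, y) ^ 2 / 2 - T (-L, y) ^ 2 / 2) := by
      linear_combination hy
    rw [heq, hC0def]
    linarith
  -- continuity of B
  have hBcont : Continuous B := by
    rw [hBdef]
    exact intervalIntegral.continuous_parametric_intervalIntegral_of_continuous'
      (f := fun L y => T (L, y) * G (L, y) - T (-L, y) * G (-L, y)) (by fun_prop) 0 Hh
  -- bound on the antiderivative of B
  have hWbd : ∀ M : ℝ, 0 ≤ M → ∫ L in (0:ℝ)..M, B L ≤ Hh := by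
    intro M hM
    have hswap : ∫ L in (0:ℝ)..M, B L
        = ∫ y in (0:ℝ)..Hh, ∫ L in (0:ℝ)..M,
            (T (L, y) * G (L, y) - T (-L, y) * G (-L, y)) := by
      rw [hBdef]
      exact swap_cont (φ := fun p : ℝ × ℝ => T (p.2, p.1) * G (p.2, p.1)
        - T (-p.2, p.1) * G (-p.2, p.1)) (by fun_prop) hH.le hM
    have hinner : ∀ y : ℝ, ∫ L in (0:ℝ)..M, (T (L, y) * G (L, y) - T (-L, y) * G (-L, y))
        = T (M, y) ^ 2 / 2 + T (-M, y) ^ 2 / 2 - T (0, y) ^ 2 := by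
      intro y
      rw [intervalIntegral.integral_sub (f := fun L => T (L, y) * G (L, y))
        (g := fun L => T (-L, y) * G (-L, y))
        (((scx T hTc y).mul (scx G hGc y)).intervalIntegrable _ _)
        ((Continuous.intervalIntegrable (by fun_prop) _ _))]
      have hcn := intervalIntegral.integral_comp_neg (a := (0:ℝ)) (b := M)
        (f := fun s => T (s, y) * G (s, y))
      rw [hcn, neg_zero, ftc y (-M) 0, ftc y 0 M]
      ring
    rw [hswap]
    have hb : ∫ y in (0:ℝ)..Hh, ∫ L in (0:ℝ)..M,
        (T (L, y) * G (L, y) - T (-L, y) * G (-L, y)) ≤ ∫ y in (0:ℝ)..Hh, (1:ℝ) := by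
      apply intervalIntegral.integral_mono_on hH.le
      · exact (intervalIntegral.continuous_parametric_intervalIntegral_of_continuous'
          (f := fun y L => T (L, y) * G (L, y) - T (-L, y) * G (-L, y))
          (by fun_prop) 0 M).intervalIntegrable _ _
      · exact intervalIntegrable_const
      · intro y _
        rw [hinner y]
        nlinarith [hT0 (M, y), hT1 (M, y), hT0 (-M, y), hT1 (-M, y), hT0 ((0:ℝ), y),
          hT1 ((0:ℝ), y), sq_nonneg (T ((0:ℝ), y))]
      
    rw [intervalIntegral.integral_const] at hb
    simpa using hb
  -- monotonicity and nonnegativity of I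
  have hImono : ∀ L1 L2 : ℝ, 0 ≤ L1 → L1 ≤ L2 → I L1 ≤ I L2 := by
    intro L1 L2 h1 h12
    apply intervalIntegral.integral_mono_on hH.le
      ((pci g hgc _ _).intervalIntegrable _ _) ((pci g hgc _ _).intervalIntegrable _ _)
    intro y _
    apply intervalIntegral.integral_mono_interval (by linarith) (by linarith) (by linarith)
      (Filter.Eventually.of_forall (fun s => hg0 (s, y)))
      ((scx g hgc y).intervalIntegrable _ _)
  have hI0 : ∀ L : ℝ, 0 ≤ L → 0 ≤ I L := by
    intro L hL
    apply intervalIntegral.integral_nonneg hH.le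
    intro y _
    exact intervalIntegral.integral_nonneg (by linarith) (fun s _ => hg0 (s, y))
  -- uniform bound on I at integer radii
  have hIbound : ∀ n : ℕ, I n ≤ Hh + 2 * C0 / κ := by
    intro n
    rcases Nat.eq_zero_or_pos n with h0 | hpos
    · subst h0
      have : I 0 = 0 := by
        rw [hIdef]
        simp
      rw [Nat.cast_zero, this]
      positivity
    · have hn1 : (1:ℝ) ≤ (n:ℝ) := by exact_mod_cast hpos
      have hn0 : (0:ℝ) ≤ (n:ℝ) := by linarith
      set M : ℝ := 2 * n with hMdef
      have hnM : (n:ℝ) ≤ M := by rw [hMdef]; linarith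
      have hM0 : 0 ≤ M := by linarith
      have hIint : ∀ p q : ℝ, 0 ≤ p → p ≤ q → IntervalIntegrable I volume p q := by
        intro p q hp hpq
        apply MonotoneOn.intervalIntegrable
        intro x hx y hy hxy
        rw [Set.uIcc_of_le hpq] at hx hy
        exact hImono x y (le_trans hp hx.1) hxy
      have step1 : κ * ∫ L in (0:ℝ)..M, I L ≤ κ * (∫ L in (0:ℝ)..M, B L) + C0 * M := by
        have h1 : ∫ L in (0:ℝ)..M, κ * I L ≤ ∫ L in (0:ℝ)..M, (κ * B L + C0) := by
          apply intervalIntegral.integral_mono_on hM0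
            ((hIint 0 M le_rfl hM0).const_mul κ)
            (((hBcont.intervalIntegrable 0 M).const_mul κ).add intervalIntegrable_const)
          intro L hL
          exact key L hL.1
        rw [intervalIntegral.integral_const_mul] at h1
        rw [intervalIntegral.integral_add ((hBcont.intervalIntegrable 0 M).const_mul κ)
          intervalIntegrable_const, intervalIntegral.integral_const_mul,
          intervalIntegral.integral_const] at h1
        simpa [smul_eq_mul, mul_comm] using h1
      have step2 : (n:ℝ) * I n ≤ ∫ L in (0:ℝ)..M, I L := by
        rw [← intervalIntegral.integral_add_adjacent_intervals
          (hIint 0 n le_rfl hn0) (hIint n M hn0 hnM)]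
        have h1 : (0:ℝ) ≤ ∫ L in (0:ℝ)..(n:ℝ), I L :=
          intervalIntegral.integral_nonneg hn0 (fun L hL => hI0 L hL.1)
        have h2 : (n:ℝ) * I n ≤ ∫ L in (n:ℝ)..M, I L := by
          have h3 : ∫ L in (n:ℝ)..M, I n ≤ ∫ L in (n:ℝ)..M, I L := by
            apply intervalIntegral.integral_mono_on hnM intervalIntegrable_const
              (hIint n M hn0 hnM)
            intro L hL
            exact hImono n L hn0 hL.1
          rw [intervalIntegral.integral_const, smul_eq_mul] at h3
          have : (M - n) = (n:ℝ) := by rw [hMdef]; ring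
          rw [this] at h3
          exact h3
        linarith
      have hW := hWbd M hM0
      have hfinal : κ * ((n:ℝ) * I n) ≤ κ * Hh + C0 * M := by
        have := mul_le_mul_of_nonneg_left step2 hκ.le
        nlinarith [step1]
      have hIn0 := hI0 n hn0
      rw [hMdef] at hfinal
      have hexp : κ * ((n:ℝ) * (Hh + 2 * C0 / κ)) = κ * (n:ℝ) * Hh + 2 * (n:ℝ) * C0 := by
        field_simp
      have h2 : κ * ((n:ℝ) * I n) ≤ κ * ((n:ℝ) * (Hh + 2 * C0 / κ)) := by
        rw [hexp]
        have hh : 0 ≤ κ * Hh * ((n:ℝ) - 1) :=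
          mul_nonneg (mul_nonneg hκ.le hH.le) (sub_nonneg.2 hn1)
        linarith [hfinal, hh]
      have h3 := le_of_mul_le_mul_left h2 hκ
      exact le_of_mul_le_mul_left h3 (by linarith : (0:ℝ) < (n:ℝ))
  -- conclusion via monotone convergence
  set K : ℝ := Hh + 2 * C0 / κ with hKdef
  have hSmeas : MeasurableSet ((Set.univ : Set ℝ) ×ˢ Set.Icc (0:ℝ) Hh) :=
    MeasurableSet.univ.prod measurableSet_Icc
  set h : ℝ × ℝ → ENNReal := fun p => ENNReal.ofReal (g p) with hhdef
  have hmeas : Measurable h := ENNReal.measurable_ofReal.comp hgc.measurable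
  set Sn : ℕ → Set (ℝ × ℝ) := fun n => Set.Icc (-(n:ℝ)) n ×ˢ Set.Icc (0:ℝ) Hh with hSndef
  have hSnmeas : ∀ n, MeasurableSet (Sn n) := fun n =>
    measurableSet_Icc.prod measurableSet_Icc
  -- lintegral over each Sn is bounded by K
  have hSnbd : ∀ n : ℕ, ∫⁻ p in Sn n, h p ≤ ENNReal.ofReal K := by
    intro n
    have hnn : -(n:ℝ) ≤ (n:ℝ) := by
      have : (0:ℝ) ≤ n := Nat.cast_nonneg n
      linarith
    have hae : Sn n =ᵐ[volume] (Set.Ioc (-(n:ℝ)) n ×ˢ Set.Ioc (0:ℝ) Hh) := by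
      have hsub : Sn n \ (Set.Ioc (-(n:ℝ)) n ×ˢ Set.Ioc (0:ℝ) Hh)
          ⊆ ({-(n:ℝ)} ×ˢ (Set.univ : Set ℝ)) ∪ ((Set.univ : Set ℝ) ×ˢ {(0:ℝ)}) := by
        rintro ⟨x, y⟩ ⟨⟨hx, hy⟩, hne⟩
        simp only [Set.mem_prod, Set.mem_Ioc, not_and_or] at hne
        simp only [Set.mem_Icc] at hx hy
        rcases hne with (hc | hc) | (hc | hc)
        · exact Or.inl ⟨Set.mem_singleton_iff.2 (le_antisymm (not_lt.1 hc) hx.1), Set.mem_univ y⟩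
        · exact absurd hx.2 hc
        · exact Or.inr ⟨Set.mem_univ x, Set.mem_singleton_iff.2 (le_antisymm (not_lt.1 hc) hy.1)⟩
        · exact absurd hy.2 hc
      have hz1 : volume (({-(n:ℝ)} ×ˢ (Set.univ : Set ℝ)) : Set (ℝ × ℝ)) = 0 := by
        rw [show (volume : Measure (ℝ × ℝ)) = (volume : Measure ℝ).prod volume from rfl,
          Measure.prod_prod]
        simp
      have hz2 : volume (((Set.univ : Set ℝ) ×ˢ {(0:ℝ)}) : Set (ℝ × ℝ)) = 0 := by
        rw [show (volume : Measure (ℝ × ℝ)) = (volume : Measure ℝ).prod volume from rfl,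
          Measure.prod_prod]
        simp
      apply MeasureTheory.ae_eq_set.2
      constructor
      · exact measure_mono_null hsub (measure_union_null hz1 hz2)
      · have he : (Set.Ioc (-(n:ℝ)) n ×ˢ Set.Ioc (0:ℝ) Hh) \ Sn n = ∅ :=
          Set.diff_eq_empty.2 (Set.prod_mono Set.Ioc_subset_Icc_self Set.Ioc_subset_Icc_self)
        rw [he]
        exact measure_empty
    calc ∫⁻ p in Sn n, h p
        = ∫⁻ p in Set.Ioc (-(n:ℝ)) n ×ˢ Set.Ioc (0:ℝ) Hh, h p := setLIntegral_congr hae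
      _ = ENNReal.ofReal (∫ p in Set.Ioc (-(n:ℝ)) n ×ˢ Set.Ioc (0:ℝ) Hh, g p) := by
          rw [← ofReal_integral_eq_lintegral_ofReal (intOnBox hgc _ _ _ _)
            (Filter.Eventually.of_forall hg0)]
      _ = ENNReal.ofReal (I n) := by
          rw [← box_eq hgc hnn hH.le, hIdef]
          simp only []
          congr 1
          exact (swap_cont hgc hnn hH.le).symm
      _ ≤ ENNReal.ofReal K := ENNReal.ofReal_le_ofReal (hIbound n)
  -- assemble
  refine ⟨hgc.aestronglyMeasurable.restrict, ?_⟩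
  rw [MeasureTheory.hasFiniteIntegral_iff_norm]
  have hns : (fun p : ℝ × ℝ => ENNReal.ofReal ‖g p‖) = h :=
    funext fun p => by rw [Real.norm_eq_abs, abs_of_nonneg (hg0 p)]
  rw [hns]
  have hcover : ∀ p : ℝ × ℝ, p ∈ (Set.univ : Set ℝ) ×ˢ Set.Icc (0:ℝ) Hh → ∃ n : ℕ, p ∈ Sn n := by
    intro p hp
    refine ⟨⌈|p.1|⌉₊, Set.mem_prod.2 ⟨?_, hp.2⟩⟩
    have h1 : |p.1| ≤ (⌈|p.1|⌉₊ : ℝ) := Nat.le_ceil _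
    exact Set.mem_Icc.2 ⟨(abs_le.1 h1).1, (abs_le.1 h1).2⟩
  have hmono : Monotone (fun n => (Sn n).indicator h) := by
    intro m n hmn
    apply Set.indicator_le_indicator_of_subset
    · exact Set.prod_mono (Set.Icc_subset_Icc (neg_le_neg (Nat.cast_le.2 hmn))
        (Nat.cast_le.2 hmn)) subset_rfl
    · exact fun _ => zero_le
  have hsup : ((Set.univ : Set ℝ) ×ˢ Set.Icc (0:ℝ) Hh).indicator h
      = fun p => ⨆ n, (Sn n).indicator h p := by
    funext p
    by_cases hp : p ∈ (Set.univ : Set ℝ) ×ˢ Set.Icc (0:ℝ) Hh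
    · rw [Set.indicator_of_mem hp]
      obtain ⟨n, hn⟩ := hcover p hp
      apply le_antisymm
      · calc h p = (Sn n).indicator h p := (Set.indicator_of_mem hn h).symm
          _ ≤ ⨆ m, (Sn m).indicator h p := le_iSup (fun m => (Sn m).indicator h p) n
      · exact iSup_le fun m => Set.indicator_le_self _ _ p
    · rw [Set.indicator_of_notMem hp]
      have hz : ∀ n, (Sn n).indicator h p = 0 := by
        intro n
        apply Set.indicator_of_notMem
        intro hmem
        exact hp (Set.mem_prod.2 ⟨Set.mem_univ p.1, (Set.mem_prod.1 hmem).2⟩)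
      simp [hz]
  calc ∫⁻ p in (Set.univ : Set ℝ) ×ˢ Set.Icc (0:ℝ) Hh, h p
      = ∫⁻ p, ((Set.univ : Set ℝ) ×ˢ Set.Icc (0:ℝ) Hh).indicator h p :=
        (lintegral_indicator hSmeas h).symm
    _ = ∫⁻ p, ⨆ n, (Sn n).indicator h p := by rw [hsup]
    _ = ⨆ n, ∫⁻ p, (Sn n).indicator h p :=
        lintegral_iSup (fun n => hmeas.indicator (hSnmeas n)) hmono
    _ = ⨆ n, ∫⁻ p in Sn n, h p := iSup_congr fun n => lintegral_indicator (hSnmeas n) h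
    _ ≤ ENNReal.ofReal K := iSup_le hSnbd
    _ < ⊤ := ENNReal.ofReal_lt_top

/-- For a bounded stationary solution on the strip whose reaction term
is integrable, the gradient is square-integrable: `∫∫_D |∇T̄|² < ∞`. -/
theorem stationary_gradient_square_integrable
    (H κ v₀ A ubar : ℝ)
    (hH : 0 < H) (hκ : 0 < κ) (hv₀ : 0 < v₀) (hA : 0 < A)
    (u : ℝ → ℝ) (hu : Continuous u) (hub : ∃ Cu, ∀ y, |u y| ≤ Cu)
    (f : ℝ → ℝ) (hfLip : ∃ Kf, LipschitzOnWith Kf f (Set.Icc 0 1))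
    (hf0 : ∀ s, 0 ≤ s → s ≤ 1 → 0 ≤ f s)
    (T : ℝ → ℝ → ℝ)
    (hTsmooth : ContDiff ℝ (⊤ : ℕ∞) (fun q : ℝ × ℝ => T q.1 q.2))
    (hT0 : ∀ ξ y, 0 ≤ T ξ y) (hT1 : ∀ ξ y, T ξ y ≤ 1)
    (hTper : ∀ ξ y, T ξ (y + H) = T ξ y)
    (hpde : ∀ ξ y,
      A * (u y - ubar) * deriv (fun s => T s y) ξ
        = κ * (deriv (deriv (fun s => T s y)) ξ + deriv (deriv (fun s => T ξ s)) y)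
          + (v₀^2 / κ) * f (T ξ y))
    (hfint : IntegrableOn (fun p : ℝ × ℝ => f (T p.1 p.2))
      (Set.univ ×ˢ Set.Icc (0:ℝ) H)) :
    IntegrableOn
      (fun p : ℝ × ℝ =>
        (deriv (fun s => T s p.2) p.1)^2 + (deriv (fun s => T p.1 s) p.2)^2)
      (Set.univ ×ˢ Set.Icc (0:ℝ) H) := by
  obtain ⟨Cu, hCu⟩ := hub
  obtain ⟨Kf, hKf⟩ := hfLip
  have hFc : Continuous (fun q : ℝ × ℝ => T q.1 q.2) := hTsmooth.continuous
  set F : ℝ × ℝ → ℝ := fun q => T q.1 q.2 with hFdef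
  set G : ℝ × ℝ → ℝ := fun q => fderiv ℝ F q (1, 0) with hGdef
  set Gy : ℝ × ℝ → ℝ := fun q => fderiv ℝ F q (0, 1) with hGydef
  have hGsm : ContDiff ℝ (⊤ : ℕ∞) G := pdsmooth F hTsmooth (1, 0)
  have hGysm : ContDiff ℝ (⊤ : ℕ∞) Gy := pdsmooth F hTsmooth (0, 1)
  set G2 : ℝ × ℝ → ℝ := fun q => fderiv ℝ G q (1, 0) with hG2def
  set H2 : ℝ × ℝ → ℝ := fun q => fderiv ℝ Gy q (0, 1) with hH2def
  have hGd : ∀ ξ y : ℝ, HasDerivAt (fun s => F (s, y)) (G (ξ, y)) ξ :=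
    fun ξ y => pdx F hTsmooth ξ y
  have hGyd : ∀ ξ y : ℝ, HasDerivAt (fun s => F (ξ, s)) (Gy (ξ, y)) y :=
    fun ξ y => pdy F hTsmooth ξ y
  have hG2d : ∀ ξ y : ℝ, HasDerivAt (fun s => G (s, y)) (G2 (ξ, y)) ξ :=
    fun ξ y => pdx G hGsm ξ y
  have hH2d : ∀ ξ y : ℝ, HasDerivAt (fun s => Gy (ξ, s)) (H2 (ξ, y)) y :=
    fun ξ y => pdy Gy hGysm ξ y
  have hd1 : ∀ ξ y : ℝ, deriv (fun s => T s y) ξ = G (ξ, y) := fun ξ y => (hGd ξ y).deriv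
  have hd1y : ∀ ξ y : ℝ, deriv (fun s => T ξ s) y = Gy (ξ, y) := fun ξ y => (hGyd ξ y).deriv
  have hd2 : ∀ ξ y : ℝ, deriv (deriv (fun s => T s y)) ξ = G2 (ξ, y) := by
    intro ξ y
    rw [show deriv (fun s => T s y) = fun s => G (s, y) from funext fun s => hd1 s y]
    exact (hG2d ξ y).deriv
  have hd2y : ∀ ξ y : ℝ, deriv (deriv (fun s => T ξ s)) y = H2 (ξ, y) := by
    intro ξ y
    rw [show deriv (fun s => T ξ s) = fun s => Gy (ξ, s) from funext fun s => hd1y ξ s]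
    exact (hH2d ξ y).deriv
  -- periodicity of Gy
  have hperGy : ∀ ξ y : ℝ, Gy (ξ, y + H) = Gy (ξ, y) := by
    intro ξ y
    have h2 := hGyd ξ (y + H)
    have h3 : HasDerivAt ((fun s => F (ξ, s)) ∘ (fun s => s + H)) (Gy (ξ, y + H) * 1) y :=
      h2.comp y ((hasDerivAt_id y).add_const H)
    have h4 : ((fun s => F (ξ, s)) ∘ (fun s => s + H)) = fun s => F (ξ, s) :=
      funext fun s => hTper ξ s
    rw [h4, mul_one] at h3
    exact h3.unique (hGyd ξ y)
  set R : ℝ × ℝ → ℝ := fun p => (v₀ ^ 2 / κ) * f (T p.1 p.2) with hRdef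
  have hfTc : Continuous (fun p : ℝ × ℝ => f (T p.1 p.2)) := by
    apply ContinuousOn.comp_continuous hKf.continuousOn hFc
    exact fun p => Set.mem_Icc.2 ⟨hT0 p.1 p.2, hT1 p.1 p.2⟩
  have hRc : Continuous R := continuous_const.mul hfTc
  have hR0 : ∀ p : ℝ × ℝ, 0 ≤ R p :=
    fun p => mul_nonneg (by positivity) (hf0 _ (hT0 p.1 p.2) (hT1 p.1 p.2))
  have hRint : IntegrableOn R (Set.univ ×ˢ Set.Icc (0:ℝ) H) := hfint.const_mul _
  set aa : ℝ → ℝ := fun y => A * (u y - ubar) with haadef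
  have ha : ∀ y, |aa y| ≤ A * (Cu + |ubar|) := by
    intro y
    rw [haadef]
    simp only []
    rw [abs_mul, abs_of_pos hA]
    apply mul_le_mul_of_nonneg_left _ hA.le
    calc |u y - ubar| ≤ |u y| + |ubar| := by
          rw [sub_eq_add_neg]
          exact (abs_add_le _ _).trans (by rw [abs_neg])
      _ ≤ Cu + |ubar| := by linarith [hCu y]
  have hpde' : ∀ p : ℝ × ℝ, aa p.2 * G p = κ * (G2 p + H2 p) + R p := by
    rintro ⟨ξ, y⟩
    have h := hpde ξ y
    rw [hd1 ξ y, hd2 ξ y, hd2y ξ y] at h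
    exact h
  have hper' : ∀ ξ : ℝ, F (ξ, H) = F (ξ, 0) := by
    intro ξ
    have := hTper ξ 0
    rwa [zero_add] at this
  have hperG' : ∀ ξ : ℝ, Gy (ξ, H) = Gy (ξ, 0) := by
    intro ξ
    have := hperGy ξ 0
    rwa [zero_add] at this
  have hmain := core H κ (A * (Cu + |ubar|)) hH hκ aa ha (by fun_prop)
    F G Gy G2 H2 R hFc hGsm.continuous hGysm.continuous
    (pdsmooth G hGsm (1, 0)).continuous (pdsmooth Gy hGysm (0, 1)).continuous hRc
    (fun p => hT0 p.1 p.2) (fun p => hT1 p.1 p.2) hR0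
    hGd hGyd hG2d hH2d hper' hperG' hpde' hRint
  have hfe : (fun p : ℝ × ℝ =>
      (deriv (fun s => T s p.2) p.1) ^ 2 + (deriv (fun s => T p.1 s) p.2) ^ 2)
      = fun p : ℝ × ℝ => G p ^ 2 + Gy p ^ 2 := by
    funext p
    rw [hd1 p.1 p.2, hd1y p.1 p.2]
  rw [hfe]
  exact hmain
end
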